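/- arXiv:2309.02062 — 6 statements merged into one kernel-verified Lean document; each statement's English description precedes it below -/
import Mathlib

section
/- A graph G = (V,E) is the complement of an interval graph if and only if there exists an ordering v_1, ..., v_n of V such that, orienting every edge from its endpoint of smaller index to its endpoint of larger index, the out-neighborhoods are nested: if i > j then N^+(v_i) ⊆ N^+(v_j). -/
open SimpleGraph

/-- `G` is an interval graph: the intersection graph of a family of closed intervals. -/
def IsIntervalGraph {V : Type*} (G : SimpleGraph V) : Prop :=
  ∃ lo hi : V → ℝ, (∀ v, lo v ≤ hi v) ∧ ∀ u v : V, u ≠ v →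
    (G.Adj u v ↔ (Set.Icc (lo u) (hi u) ∩ Set.Icc (lo v) (hi v)).Nonempty)

/-- `G` is the intersection graph of axis-parallel boxes in `ℝ^d`. -/
def HasBoxRep {V : Type*} (G : SimpleGraph V) (d : ℕ) : Prop :=
  ∃ lo hi : V → Fin d → ℝ, (∀ v i, lo v i ≤ hi v i) ∧
    ∀ u v : V, u ≠ v →
      (G.Adj u v ↔ ∀ i, (Set.Icc (lo u i) (hi u i) ∩ Set.Icc (lo v i) (hi v i)).Nonempty)

/-- The boxicity of a graph. -/
noncomputable def boxicity {V : Type*} (G : SimpleGraph V) : ℕ := sInf {d | HasBoxRep G d}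

/-- The Kneser graph `KG(n,2)`. -/
def kneser2 (n : ℕ) : SimpleGraph {s : Finset (Fin n) // s.card = 2} where
  Adj a b := Disjoint a.1 b.1
  symm := ⟨fun a b h => h.symm⟩
  loopless := ⟨fun a h => by
    have h2 := a.2
    simp only [disjoint_self, Finset.bot_eq_empty] at h
    rw [h] at h2
    simp at h2⟩

/-- The out-neighborhood of `σ i` for a linear ordering `σ` of the vertices. -/
def Nplus {V : Type*} (G : SimpleGraph V) {n : ℕ} (σ : Fin n ≃ V) (i : Fin n) : Set V :=
  {v | ∃ m : Fin n, i < m ∧ v = σ m ∧ G.Adj (σ i) (σ m)}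

/-- `Vset G σ i` is the set `V_i` from the prefix-intersection construction:
common neighbors of `σ 0, …, σ i`. -/
def Vset {V : Type*} (G : SimpleGraph V) {n : ℕ} (σ : Fin n ≃ V) (i : Fin n) : Set V :=
  {w | ∀ j : Fin n, j ≤ i → G.Adj (σ j) w}

/-- The graph `G^σ` from the prefix-intersection construction. -/
def Gsigma {V : Type*} (G : SimpleGraph V) {n : ℕ} (σ : Fin n ≃ V) : SimpleGraph V :=
  SimpleGraph.fromRel (fun u v => ∃ i : Fin n, u = σ i ∧ v ∈ Vset G σ i)

/-!
Order the vertices by the right endpoints of their intervals in a model of `Gᶜ`. Two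
vertices with `hi u ≤ hi v` are adjacent in `G` exactly when `hi u < lo v`, so a vertex
`σ m` adjacent to `σ i` (with `i < m`) is also adjacent to every earlier `σ j`: the
in-neighbourhoods are initial segments, which is the nesting of out-neighbourhoods.
Conversely, if the in-neighbourhood of `σ m` is `{σ i | i < c m}`, the intervals
`[c m, m]` represent `Gᶜ`.
-/

open Finset

theorem nonempty_Icc_inter_Icc_iff_of_le {α : Type*} [LinearOrder α] {a₁ b₁ a₂ b₂ : α}
    (h₁ : a₁ ≤ b₁) (hb : b₁ ≤ b₂) :
    (Set.Icc a₁ b₁ ∩ Set.Icc a₂ b₂).Nonempty ↔ a₂ ≤ b₁ := by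
  rw [Set.Icc_inter_Icc, Set.nonempty_Icc, min_eq_left hb, max_le_iff, and_iff_right h₁]

theorem Fin.mem_iff_lt_card_of_isLowerSet {n : ℕ} {s : Finset (Fin n)}
    (hs : IsLowerSet (s : Set (Fin n))) (i : Fin n) : i ∈ s ↔ (i : ℕ) < #s := by
  rcases hs.eq_univ_or_Iio with h | ⟨a, h⟩
  · rw [coe_eq_univ] at h
    simp [h]
  · rw [← coe_Iio, coe_inj] at h
    rw [h, mem_Iio, Fin.card_Iio, Fin.lt_def]

theorem Fintype.exists_equiv_fin_monotone_comp {V α : Type*} [Fintype V] [LinearOrder α]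
    (f : V → α) : ∃ σ : Fin (Fintype.card V) ≃ V, Monotone (f ∘ σ) :=
  let e := Fintype.equivFin V
  ⟨(Tuple.sort (f ∘ e.symm)).trans e.symm, Tuple.monotone_sort (f ∘ e.symm)⟩

namespace SimpleGraph

variable {V : Type*} (G : SimpleGraph V)

theorem compl_adj_iff_iff_adj_iff {lo hi : V → ℝ} (hlo : ∀ v, lo v ≤ hi v) {u v : V}
    (huv : u ≠ v) (hle : hi u ≤ hi v) :
    (Gᶜ.Adj u v ↔ (Set.Icc (lo u) (hi u) ∩ Set.Icc (lo v) (hi v)).Nonempty) ↔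
      (G.Adj u v ↔ hi u < lo v) := by
  rw [compl_adj, nonempty_Icc_inter_Icc_iff_of_le (hlo u) hle, ← not_lt]
  simp only [ne_eq, huv, not_false_eq_true, true_and, not_iff_not]

theorem isIntervalGraph_compl_iff :
    IsIntervalGraph Gᶜ ↔ ∃ lo hi : V → ℝ, (∀ v, lo v ≤ hi v) ∧
      ∀ u v, u ≠ v → hi u ≤ hi v → (G.Adj u v ↔ hi u < lo v) := by
  refine exists₂_congr fun lo hi => and_congr_right fun hlo => ⟨?_, ?_⟩
  · exact fun h u v huv hle => (G.compl_adj_iff_iff_adj_iff hlo huv hle).1 (h u v huv)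
  · intro h u v huv
    rcases le_total (hi u) (hi v) with hle | hle
    · exact (G.compl_adj_iff_iff_adj_iff hlo huv hle).2 (h u v huv hle)
    · rw [adj_comm, Set.inter_comm]
      exact (G.compl_adj_iff_iff_adj_iff hlo huv.symm hle).2 (h v u huv.symm hle)

variable {n : ℕ} (σ : Fin n ≃ V)

theorem nplus_nested_iff :
    (∀ i j, j < i → Nplus G σ i ⊆ Nplus G σ j) ↔
      ∀ ⦃j i m : Fin n⦄, j < i → i < m → G.Adj (σ i) (σ m) → G.Adj (σ j) (σ m) := by
  constructor
  · intro h j i m hji him hadj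
    obtain ⟨m', -, hm', hadj'⟩ := h i j hji ⟨m, him, rfl, hadj⟩
    rwa [σ.injective hm']
  · rintro h i j hji _ ⟨m, him, rfl, hadj⟩
    exact ⟨m, hji.trans him, rfl, h hji him hadj⟩

theorem exists_adj_iff_lt_of_nested
    (h : ∀ ⦃j i m : Fin n⦄, j < i → i < m → G.Adj (σ i) (σ m) → G.Adj (σ j) (σ m)) :
    ∃ c : Fin n → ℕ, (∀ m, c m ≤ m) ∧
      ∀ ⦃i m⦄, i < m → (G.Adj (σ i) (σ m) ↔ (i : ℕ) < c m) := by
  classical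
  let inNbhd (m : Fin n) : Finset (Fin n) := {i | i < m ∧ G.Adj (σ i) (σ m)}
  have hlower (m : Fin n) : IsLowerSet (inNbhd m : Set (Fin n)) := by
    intro i j hji hi
    simp only [inNbhd, coe_filter, mem_univ, true_and, Set.mem_ofPred_eq] at hi ⊢
    rcases hji.lt_or_eq with hji | rfl
    · exact ⟨hji.trans hi.1, h hji hi.1 hi.2⟩
    · exact hi
  have hmem (i m : Fin n) := Fin.mem_iff_lt_card_of_isLowerSet (hlower m) i
  refine ⟨fun m => #(inNbhd m), fun m => ?_, fun i m him => ?_⟩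
  · simpa [inNbhd] using hmem m m
  · simpa [inNbhd, him] using hmem i m

theorem nested_of_monotone_hi {lo hi : V → ℝ}
    (hrep : ∀ u v, u ≠ v → hi u ≤ hi v → (G.Adj u v ↔ hi u < lo v))
    (hσ : Monotone (hi ∘ σ)) ⦃j i m : Fin n⦄ (hji : j < i) (him : i < m)
    (hadj : G.Adj (σ i) (σ m)) : G.Adj (σ j) (σ m) := by
  have hij : hi (σ j) ≤ hi (σ i) := hσ hji.le
  have hadj_iff (a b : Fin n) (hab : a < b) :=
    hrep (σ a) (σ b) (σ.injective.ne hab.ne) (hσ hab.le)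
  exact (hadj_iff j m (hji.trans him)).2 (hij.trans_lt ((hadj_iff i m him).1 hadj))

end SimpleGraph

/-- `G` is the complement of an interval graph iff it has a nested-out-neighborhood ordering. -/
theorem compl_interval_iff_nested_ordering {V : Type*} [Fintype V] (G : SimpleGraph V) :
    IsIntervalGraph Gᶜ ↔ ∃ σ : Fin (Fintype.card V) ≃ V,
      ∀ i j : Fin (Fintype.card V), j < i → Nplus G σ i ⊆ Nplus G σ j := by
  simp only [nplus_nested_iff, isIntervalGraph_compl_iff]
  constructor
  · rintro ⟨lo, hi, hlo, hrep⟩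
    obtain ⟨σ, hσ⟩ := Fintype.exists_equiv_fin_monotone_comp hi
    exact ⟨σ, G.nested_of_monotone_hi σ hrep hσ⟩
  · rintro ⟨σ, hnested⟩
    obtain ⟨c, hc, hadj⟩ := G.exists_adj_iff_lt_of_nested σ hnested
    refine ⟨fun v => c (σ.symm v), fun v => σ.symm v, fun v => Nat.cast_le.2 (hc _), ?_⟩
    intro u v huv hle
    obtain ⟨i, rfl⟩ := σ.surjective u
    obtain ⟨m, rfl⟩ := σ.surjective v
    simp only [Equiv.symm_apply_apply, Nat.cast_le, Nat.cast_lt] at hle ⊢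
    exact hadj (lt_of_le_of_ne (Fin.le_def.2 hle) (ne_of_apply_ne σ huv))
end

section
/- For any graph G = (V,E) and any linear ordering σ of V, the graph G^σ = (V, E^σ), where E^σ is defined by the prefix-intersection construction (V_0 := V, V_i := V_{i-1} ∩ N_G(v_i), and E^σ is the union over i of the edges from v_i to V_i), is an interval-order subgraph of G, i.e., its complement is an interval graph. -/
open SimpleGraph

/-
Let `f(b)` be the first position `j` at which `σ j` is not adjacent to `σ b`; it exists and
`f(b) ≤ b` since `σ b` is not adjacent to itself. Then `σ b ∈ V_i` exactly when `i < f(b)`, so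
`σ a` and `σ b` are adjacent in `G^σ` iff `a < f(b)` or `b < f(a)`, i.e. iff the intervals
`[f(a), a]` and `[f(b), b]` are disjoint. These intervals therefore represent the complement of
`G^σ`, and every edge of `G^σ` is an edge of `G` by the choice of `f`.
-/

theorem Set.Icc_inter_Icc_nonempty_iff {α : Type*} [LinearOrder α] {a b c d : α}
    (hab : a ≤ b) (hcd : c ≤ d) :
    (Set.Icc a b ∩ Set.Icc c d).Nonempty ↔ a ≤ d ∧ c ≤ b := by
  rw [Set.Icc_inter_Icc, Set.nonempty_Icc, sup_le_iff, le_inf_iff, le_inf_iff]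
  tauto

theorem isIntervalGraph_compl_of_adj_iff {V : Type*} {H : SimpleGraph V} (lo hi : V → ℝ)
    (hle : ∀ v, lo v ≤ hi v)
    (hadj : ∀ u v, u ≠ v → (H.Adj u v ↔ hi u < lo v ∨ hi v < lo u)) :
    IsIntervalGraph Hᶜ := by
  refine ⟨lo, hi, hle, fun u v huv => ?_⟩
  rw [compl_adj, hadj u v huv, Set.Icc_inter_Icc_nonempty_iff (hle u) (hle v), not_or,
    not_lt, not_lt]
  exact ⟨fun h => ⟨h.2.2, h.2.1⟩, fun h => ⟨huv, h.2, h.1⟩⟩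

section FirstNonNeighbor

variable {V : Type*} (G : SimpleGraph V) [DecidableRel G.Adj] {n : ℕ} (σ : Fin n ≃ V)

def firstNonNeighbor (b : Fin n) : Fin n :=
  (Finset.univ.filter fun j => ¬ G.Adj (σ j) (σ b)).min' ⟨b, by simp⟩

variable {G σ}

theorem firstNonNeighbor_le_of_not_adj {b j : Fin n} (h : ¬ G.Adj (σ j) (σ b)) :
    firstNonNeighbor G σ b ≤ j :=
  Finset.min'_le _ _ (by simpa using h)

theorem firstNonNeighbor_le (b : Fin n) : firstNonNeighbor G σ b ≤ b :=
  firstNonNeighbor_le_of_not_adj G.irrefl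

theorem not_adj_firstNonNeighbor (b : Fin n) : ¬ G.Adj (σ (firstNonNeighbor G σ b)) (σ b) :=
  (Finset.mem_filter.mp
    (Finset.min'_mem (Finset.univ.filter fun j => ¬ G.Adj (σ j) (σ b)) _)).2

theorem adj_of_lt_firstNonNeighbor {b j : Fin n} (h : j < firstNonNeighbor G σ b) :
    G.Adj (σ j) (σ b) := by
  by_contra hj
  exact (firstNonNeighbor_le_of_not_adj hj).not_gt h

theorem apply_mem_Vset_iff (i b : Fin n) :
    σ b ∈ Vset G σ i ↔ i < firstNonNeighbor G σ b := by
  refine ⟨fun h => ?_, fun h j hj => adj_of_lt_firstNonNeighbor (hj.trans_lt h)⟩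
  by_contra hle
  exact not_adj_firstNonNeighbor b (h _ (not_lt.mp hle))

theorem Gsigma_adj_apply_iff (a b : Fin n) :
    (Gsigma G σ).Adj (σ a) (σ b) ↔
      a ≠ b ∧ (a < firstNonNeighbor G σ b ∨ b < firstNonNeighbor G σ a) := by
  simp only [Gsigma, fromRel_adj, ne_eq, σ.apply_eq_iff_eq, exists_eq_left', apply_mem_Vset_iff]

theorem Gsigma_le : Gsigma G σ ≤ G := by
  intro u v
  obtain ⟨a, rfl⟩ := σ.surjective u
  obtain ⟨b, rfl⟩ := σ.surjective v
  rw [Gsigma_adj_apply_iff]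
  rintro ⟨-, h | h⟩
  exacts [adj_of_lt_firstNonNeighbor h, (adj_of_lt_firstNonNeighbor h).symm]

theorem isIntervalGraph_compl_Gsigma : IsIntervalGraph (Gsigma G σ)ᶜ := by
  refine isIntervalGraph_compl_of_adj_iff (fun v => (firstNonNeighbor G σ (σ.symm v) : ℝ))
    (fun v => (σ.symm v : ℝ)) (fun v => Nat.cast_le.mpr (firstNonNeighbor_le _)) ?_
  simp only [σ.surjective.forall, Equiv.symm_apply_apply, ne_eq, σ.apply_eq_iff_eq,
    Nat.cast_lt, Fin.val_fin_lt]
  intro a b hab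
  rw [Gsigma_adj_apply_iff, and_iff_right hab]

end FirstNonNeighbor

/-- `G^σ` is an interval-order subgraph of `G`. -/
theorem Gsigma_interval_order_subgraph {V : Type*} [Fintype V] (G : SimpleGraph V)
    (σ : Fin (Fintype.card V) ≃ V) :
    Gsigma G σ ≤ G ∧ IsIntervalGraph (Gsigma G σ)ᶜ := by
  classical
  exact ⟨Gsigma_le, isIntervalGraph_compl_Gsigma⟩
end

section
/- For every n ≥ 5, the boxicity of KG(n,2) is at most n - 2; equivalently, the line graph L(K_n) admits a cover of its edge set by n - 2 interval-order subgraphs. -/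
open SimpleGraph

/-- The line graph of `K_n`, realized as the complement of the Kneser graph `KG(n,2)`. -/
def lineKn (n : ℕ) : SimpleGraph {s : Finset (Fin n) // s.card = 2} := (kneser2 n)ᶜ

/-!
For `k ∉ {p, q}` let `H_k` be the subgraph of `L(K_n)` in which all edges through `k` are pairwise
adjacent, the edge `kp` is adjacent to every edge through `p`, and `kq` to every edge through `q`.
Its complement is an interval graph: an edge `ka` is the point `a + 1`, with `p` and `q` moved to the
two ends `0` and `n + 1`, and an edge missing `k` is the interval `[0, n + 1]`, shortened by one at
the left end if it contains `p` and at the right end if it contains `q`. Taking `p`, `q` to be the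
last two vertices, the `n - 2` graphs `H_k` cover `L(K_n)`: two edges sharing `c ∉ {p, q}` are
adjacent in `H_c`, and two edges sharing `c ∈ {p, q}` span a third vertex `k ∉ {p, q}`, so they are
adjacent in `H_k`. Such a cover of the complement of `KG(n, 2)` by `n - 2` interval orders is a box
representation in dimension `n - 2`.
-/

section Boxicity

variable {V : Type*}

lemma isIntervalGraph_of_nat (G : SimpleGraph V) (lo hi : V → ℕ) (hle : ∀ v, lo v ≤ hi v)
    (hadj : ∀ u v, u ≠ v → (G.Adj u v ↔ lo u ≤ hi v ∧ lo v ≤ hi u)) : IsIntervalGraph G := by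
  refine ⟨fun v => lo v, fun v => hi v, fun v => Nat.cast_le.mpr (hle v), fun u v huv => ?_⟩
  rw [hadj u v huv, Set.Icc_inter_Icc, Set.nonempty_Icc, sup_le_iff, le_inf_iff, le_inf_iff]
  simp only [Nat.cast_le]
  have := hle u
  have := hle v
  tauto

lemma hasBoxRep_of_compl_eq_iSup {G : SimpleGraph V} {d : ℕ} (H : Fin d → SimpleGraph V)
    (hH : ∀ i, IsIntervalGraph (H i)ᶜ) (hcover : ⨆ i, H i = Gᶜ) : HasBoxRep G d := by
  choose lo hi hle hadj using hH
  refine ⟨fun v i => lo i v, fun v i => hi i v, fun v i => hle i v, fun u v huv => ?_⟩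
  simp only [← hadj _ u v huv, compl_adj, ne_eq, huv, not_false_eq_true, true_and]
  rw [← not_exists, ← iSup_adj, hcover, compl_adj, not_and, not_not]
  exact ⟨fun h _ => h, fun h => h huv⟩

lemma boxicity_le_of_hasBoxRep {G : SimpleGraph V} {d : ℕ} (h : HasBoxRep G d) :
    boxicity G ≤ d :=
  Nat.sInf_le h

end Boxicity

lemma Finset.exists_eq_pair_of_card_eq_two {α : Type*} [DecidableEq α] {s : Finset α} {k : α}
    (hs : s.card = 2) (hk : k ∈ s) : ∃ a, a ≠ k ∧ s = {k, a} := by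
  obtain ⟨x, y, hxy, rfl⟩ := Finset.card_eq_two.mp hs
  rcases Finset.mem_insert.mp hk with rfl | hk
  · exact ⟨y, hxy.symm, rfl⟩
  · rw [Finset.mem_singleton.mp hk]
    exact ⟨x, hxy, Finset.pair_comm x y⟩

section StarCover

variable {n : ℕ}

def starSubgraph (k p q : Fin n) : SimpleGraph {s : Finset (Fin n) // s.card = 2} where
  Adj u v := u ≠ v ∧ (k ∈ u.1 ∧ k ∈ v.1 ∨
    (p ∈ u.1 ∧ p ∈ v.1 ∨ q ∈ u.1 ∧ q ∈ v.1) ∧ (k ∈ u.1 ∨ k ∈ v.1))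
  symm := ⟨fun _ _ ⟨huv, h⟩ => ⟨huv.symm, by tauto⟩⟩
  loopless := ⟨fun _ h => h.1 rfl⟩

def starPos (p q a : Fin n) : ℕ :=
  if a = p then 0 else if a = q then n + 1 else a + 1

lemma starPos_self_left (p q : Fin n) : starPos p q p = 0 := if_pos rfl

lemma starPos_self_right {p q : Fin n} (hqp : q ≠ p) : starPos p q q = n + 1 := by
  rw [starPos, if_neg hqp, if_pos rfl]

lemma starPos_of_ne {p q a : Fin n} (hap : a ≠ p) (haq : a ≠ q) : starPos p q a = a + 1 := by
  rw [starPos, if_neg hap, if_neg haq]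

lemma starPos_injective (p q : Fin n) : Function.Injective (starPos p q) := by
  intro a b h
  unfold starPos at h
  split_ifs at h <;> omega

/-- For `k ∈ u` the sum has a single term, indexed by the other endpoint of `u`. -/
def starLo (k p q : Fin n) (u : {s : Finset (Fin n) // s.card = 2}) : ℕ :=
  if k ∈ u.1 then ∑ a ∈ u.1.erase k, starPos p q a else if p ∈ u.1 then 1 else 0

def starHi (k p q : Fin n) (u : {s : Finset (Fin n) // s.card = 2}) : ℕ :=
  if k ∈ u.1 then ∑ a ∈ u.1.erase k, starPos p q a else if q ∈ u.1 then n else n + 1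

variable {k p q : Fin n} {u v : {s : Finset (Fin n) // s.card = 2}}

lemma starSubgraph_adj : (starSubgraph k p q).Adj u v ↔ u ≠ v ∧ (k ∈ u.1 ∧ k ∈ v.1 ∨
    (p ∈ u.1 ∧ p ∈ v.1 ∨ q ∈ u.1 ∧ q ∈ v.1) ∧ (k ∈ u.1 ∨ k ∈ v.1)) :=
  Iff.rfl

lemma starSubgraph_le_lineKn : starSubgraph k p q ≤ lineKn n := by
  intro u v huv
  obtain ⟨huv, h⟩ := starSubgraph_adj.mp huv
  refine ⟨huv, Finset.not_disjoint_iff.mpr ?_⟩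
  rcases h with ⟨hu, hv⟩ | ⟨⟨hu, hv⟩ | ⟨hu, hv⟩, -⟩
  exacts [⟨k, hu, hv⟩, ⟨p, hu, hv⟩, ⟨q, hu, hv⟩]

lemma exists_starSubgraph_adj (h : (lineKn n).Adj u v) :
    ∃ k, k ≠ p ∧ k ≠ q ∧ (starSubgraph k p q).Adj u v := by
  obtain ⟨huv, hnd⟩ := h
  obtain ⟨c, hcu, hcv⟩ := Finset.not_disjoint_iff.mp hnd
  by_cases hc : c = p ∨ c = q
  · -- two distinct 2-sets cannot both lie in `{p, q}`
    have hsub : ¬ u.1 ∪ v.1 ⊆ {p, q} := by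
      intro hpq
      have eq_pq : ∀ w : {s : Finset (Fin n) // s.card = 2}, w.1 ⊆ {p, q} → w.1 = {p, q} :=
        fun w hw => Finset.eq_of_subset_of_card_le hw (by rw [w.2]; exact Finset.card_le_two)
      exact huv (Subtype.ext ((eq_pq u (Finset.union_subset_left hpq)).trans
        (eq_pq v (Finset.union_subset_right hpq)).symm))
    obtain ⟨k, hk, hkpq⟩ := Finset.not_subset.mp hsub
    simp only [Finset.mem_insert, Finset.mem_singleton, not_or] at hkpq
    refine ⟨k, hkpq.1, hkpq.2, starSubgraph_adj.mpr ⟨huv, Or.inr ⟨?_, Finset.mem_union.mp hk⟩⟩⟩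
    rcases hc with rfl | rfl
    exacts [Or.inl ⟨hcu, hcv⟩, Or.inr ⟨hcu, hcv⟩]
  · push Not at hc
    exact ⟨c, hc.1, hc.2, starSubgraph_adj.mpr ⟨huv, Or.inl ⟨hcu, hcv⟩⟩⟩

lemma starLo_starHi_of_eq_pair {a : Fin n} (hu : u.1 = {k, a}) (hak : a ≠ k) :
    starLo k p q u = starPos p q a ∧ starHi k p q u = starPos p q a := by
  have hk : k ∈ u.1 := hu ▸ Finset.mem_insert_self k {a}
  have herase : u.1.erase k = {a} := by
    rw [hu, Finset.erase_insert (Finset.notMem_singleton.mpr hak.symm)]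
  simp only [starLo, starHi, if_pos hk, herase, Finset.sum_singleton, and_self]

lemma starSubgraph_adj_iff_of_eq_pair (hkp : k ≠ p) (hkq : k ≠ q) {a : Fin n}
    (hu : u.1 = {k, a}) (hak : a ≠ k) (hkv : k ∉ v.1) :
    (starSubgraph k p q).Adj u v ↔
      starHi k p q v < starLo k p q u ∨ starHi k p q u < starLo k p q v := by
  obtain ⟨hlo, hhi⟩ := starLo_starHi_of_eq_pair (p := p) (q := q) hu hak
  have hk : k ∈ u.1 := hu ▸ Finset.mem_insert_self k {a}
  have hmem : ∀ c, c ≠ k → (c ∈ u.1 ↔ a = c) := fun c hck => by simp [hu, hck, eq_comm]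
  have hne : u ≠ v := fun h => hkv (h ▸ hk)
  have hlov : starLo k p q v = if p ∈ v.1 then 1 else 0 := if_neg hkv
  have hhiv : starHi k p q v = if q ∈ v.1 then n else n + 1 := if_neg hkv
  rw [starSubgraph_adj, hlo, hhi, hlov, hhiv]
  simp only [ne_eq, hne, not_false_eq_true, hk, hkv, and_false, or_false, and_true, true_and,
    false_or, hmem p hkp.symm, hmem q hkq.symm]
  rcases eq_or_ne a p with rfl | hap
  · rw [starPos_self_left]
    by_cases hav : a ∈ v.1
    · simp [hav]
    · simp only [hav, if_false, true_and, false_or, Nat.not_lt_zero, lt_self_iff_false,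
        or_false, iff_false, not_and]
      rintro rfl
      exact hav
  rcases eq_or_ne a q with rfl | haq
  · rw [starPos_self_right hap]
    simp only [hap, false_and, false_or, true_and]
    split_ifs <;> simp_all
  · have := a.isLt
    rw [starPos_of_ne hap haq]
    simp only [hap, haq, false_and, or_self, false_iff]
    split_ifs <;> omega

lemma starLo_le_one_of_notMem (hku : k ∉ u.1) : starLo k p q u ≤ 1 := by
  rw [starLo, if_neg hku]
  split_ifs <;> omega

lemma le_starHi_of_notMem (hku : k ∉ u.1) : n ≤ starHi k p q u := by
  rw [starHi, if_neg hku]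
  split_ifs <;> omega

lemma starLo_le_starHi : starLo k p q u ≤ starHi k p q u := by
  by_cases hku : k ∈ u.1
  · rw [starLo, starHi, if_pos hku, if_pos hku]
  · have := k.pos
    have := starLo_le_one_of_notMem (p := p) (q := q) hku
    have := le_starHi_of_notMem (p := p) (q := q) hku
    omega

lemma starSubgraph_adj_iff (hkp : k ≠ p) (hkq : k ≠ q) (huv : u ≠ v) :
    (starSubgraph k p q).Adj u v ↔
      starHi k p q v < starLo k p q u ∨ starHi k p q u < starLo k p q v := by
  by_cases hku : k ∈ u.1 <;> by_cases hkv : k ∈ v.1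
  · obtain ⟨a, hak, hu⟩ := Finset.exists_eq_pair_of_card_eq_two u.2 hku
    obtain ⟨b, hbk, hv⟩ := Finset.exists_eq_pair_of_card_eq_two v.2 hkv
    obtain ⟨hlou, hhiu⟩ := starLo_starHi_of_eq_pair (p := p) (q := q) hu hak
    obtain ⟨hlov, hhiv⟩ := starLo_starHi_of_eq_pair (p := p) (q := q) hv hbk
    have hab : starPos p q b ≠ starPos p q a := fun h =>
      huv (Subtype.ext (by rw [hu, hv, starPos_injective p q h]))
    rw [hlou, hhiu, hlov, hhiv]
    exact iff_of_true (starSubgraph_adj.mpr ⟨huv, Or.inl ⟨hku, hkv⟩⟩) (lt_or_gt_of_ne hab)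
  · obtain ⟨a, hak, hu⟩ := Finset.exists_eq_pair_of_card_eq_two u.2 hku
    exact starSubgraph_adj_iff_of_eq_pair hkp hkq hu hak hkv
  · obtain ⟨b, hbk, hv⟩ := Finset.exists_eq_pair_of_card_eq_two v.2 hkv
    rw [adj_comm, or_comm]
    exact starSubgraph_adj_iff_of_eq_pair hkp hkq hv hbk hku
  · refine iff_of_false (fun h => ?_) ?_
    · rcases (starSubgraph_adj.mp h).2 with ⟨hu, -⟩ | ⟨-, hu | hv⟩
      exacts [hku hu, hku hu, hkv hv]
    · have := k.pos
      have := starLo_le_one_of_notMem (p := p) (q := q) hku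
      have := starLo_le_one_of_notMem (p := p) (q := q) hkv
      have := le_starHi_of_notMem (p := p) (q := q) hku
      have := le_starHi_of_notMem (p := p) (q := q) hkv
      omega

lemma isIntervalGraph_compl_starSubgraph (hkp : k ≠ p) (hkq : k ≠ q) :
    IsIntervalGraph (starSubgraph k p q)ᶜ := by
  refine isIntervalGraph_of_nat _ (starLo k p q) (starHi k p q) (fun _ => starLo_le_starHi)
    fun u v huv => ?_
  rw [compl_adj, starSubgraph_adj_iff hkp hkq huv]
  simp only [ne_eq, huv, not_false_eq_true, true_and, not_or, not_lt]

end StarCover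

/-- `boxi(KG(n,2)) ≤ n-2`, and `L(K_n)` has a cover by `n-2` interval-order subgraphs. -/
theorem kneser2_boxicity_upper (n : ℕ) (hn : 5 ≤ n) :
    boxicity (kneser2 n) ≤ n - 2 ∧
    ∃ H : Fin (n - 2) → SimpleGraph {s : Finset (Fin n) // s.card = 2},
      (∀ i, IsIntervalGraph (H i)ᶜ) ∧ (⨆ i, H i) = lineKn n := by
  let p : Fin n := ⟨n - 2, by omega⟩
  let q : Fin n := ⟨n - 1, by omega⟩
  let H i := starSubgraph (Fin.castLE (Nat.sub_le n 2) i) p q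
  have hH : ∀ i, IsIntervalGraph (H i)ᶜ := fun i =>
    isIntervalGraph_compl_starSubgraph (Fin.ne_of_val_ne (by simp [p]; omega))
      (Fin.ne_of_val_ne (by simp [q]; omega))
  have hcover : ⨆ i, H i = lineKn n := by
    refine le_antisymm (iSup_le fun _ => starSubgraph_le_lineKn) fun u v huv => ?_
    obtain ⟨k, hkp, hkq, hadj⟩ := exists_starSubgraph_adj (p := p) (q := q) huv
    have hk : (k : ℕ) < n - 2 := by
      have := k.isLt
      have := Fin.val_ne_of_ne hkp
      have := Fin.val_ne_of_ne hkq
      simp only [p, q] at *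
      omega
    exact iSup_adj.mpr ⟨⟨k, hk⟩, hadj⟩
  exact ⟨boxicity_le_of_hasBoxRep (hasBoxRep_of_compl_eq_iSup H hH hcover), H, hH, hcover⟩
end

section
/- For n ≥ 5 and distinct vertices a,b,c,d,e of K_n, the subgraph of L(K_n) with edge set E_{a,b,c,d,e} = Q_a ∪ δ_{ab} ∪ δ_{ad} ∪ K_{{a,b,c}} ∪ K_{{a,d,e}} is an interval-order graph (its complement is an interval graph) and has exactly (n+2)(n-1)/2 edges. -/
open SimpleGraph

/-- The clique `Q_v` in `L(K_n)` on the edges incident to `v`. -/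
def Qv {n : ℕ} (a : Fin n) : SimpleGraph {s : Finset (Fin n) // s.card = 2} :=
  SimpleGraph.fromRel (fun e f => a ∈ e.1 ∧ a ∈ f.1)

/-- The star `δ_{uv}` of the vertex `uv` in `L(K_n)`. -/
def Dstar {n : ℕ} (u v : Fin n) : SimpleGraph {s : Finset (Fin n) // s.card = 2} :=
  SimpleGraph.fromRel (fun e f => e.1 = {u, v} ∧ ¬ Disjoint e.1 f.1)

/-- The half-star `δ_{uv⁻}`: edges from `uv` to edges of `K_n` incident to `u`. -/
def DstarHalf {n : ℕ} (u v : Fin n) : SimpleGraph {s : Finset (Fin n) // s.card = 2} :=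
  SimpleGraph.fromRel (fun e f => e.1 = {u, v} ∧ u ∈ f.1)

/-- `K_U`: the edge set of `L(K_n[U])`. -/
def KU {n : ℕ} (U : Finset (Fin n)) : SimpleGraph {s : Finset (Fin n) // s.card = 2} :=
  SimpleGraph.fromRel (fun e f => e.1 ⊆ U ∧ f.1 ⊆ U ∧ ¬ Disjoint e.1 f.1)

/-- `K_{u,v,w⁻} = {(uv,uw), (uv,vw)}`. -/
def Kminus {n : ℕ} (u v w : Fin n) : SimpleGraph {s : Finset (Fin n) // s.card = 2} :=
  SimpleGraph.fromRel (fun e f => e.1 = {u, v} ∧ (f.1 = {u, w} ∨ f.1 = {v, w}))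

/-!
Every edge of `E_{a,b,c,d,e}` has an endpoint through `a`: the edge set is the disjoint union of
the clique `Q_a`, the half-stars from `ab` and `ad` to the edges through `b`, resp. `d`, and the
two edges `(ac, bc)`, `(ae, de)`. These have `C(n-1, 2)`, `n - 2`, `n - 2`, `1` and `1` edges.

In the complement the edges `ax` are pairwise non-adjacent, so they become distinct points, with
`b, c` to the left of all other vertices and `e, d` to the right. An edge `t` avoiding `a` is
adjacent to `ax` exactly when `x = b ∈ t`, `x = d ∈ t`, `x = c` and `t = bc`, or `x = e` and
`t = de`: in the order `b, c, …, e, d` these `x` form a prefix and a suffix, so the remaining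
points form a segment, which is the interval of `t`. All these segments contain `[0, n - 1]`,
as the edges avoiding `a` are pairwise non-adjacent in `E_{a,b,c,d,e}`.
-/

section

variable {n : ℕ}

abbrev KnEdge (n : ℕ) := {s : Finset (Fin n) // s.card = 2}

namespace KnEdge

def pair (u v : Fin n) (h : u ≠ v) : KnEdge n := ⟨{u, v}, Finset.card_pair h⟩

@[simp] lemma pair_val {u v : Fin n} (h : u ≠ v) : (pair u v h).1 = {u, v} := rfl

lemma val_eq_pair_iff {s : KnEdge n} {u v : Fin n} (huv : u ≠ v) :
    s.1 = {u, v} ↔ u ∈ s.1 ∧ v ∈ s.1 := by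
  refine ⟨fun h => by simp [h], fun ⟨hu, hv⟩ => (Finset.eq_of_subset_of_card_le ?_ ?_).symm⟩
  · simp [Finset.insert_subset_iff, hu, hv]
  · rw [s.2, Finset.card_pair huv]

lemma eq_pair_iff {s : KnEdge n} {u v : Fin n} (huv : u ≠ v) :
    s = pair u v huv ↔ u ∈ s.1 ∧ v ∈ s.1 :=
  Subtype.ext_iff.trans (val_eq_pair_iff huv)

lemma val_eq_of_subset_triple {s : KnEdge n} {u v w : Fin n} (hs : s.1 ⊆ {u, v, w})
    (hu : u ∉ s.1) : s.1 = {v, w} :=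
  Finset.eq_of_subset_of_card_le ((Finset.subset_insert_iff_of_notMem hu).1 hs)
    (by rw [s.2]; exact Finset.card_le_two)

def incident (a : Fin n) : {x // x ≠ a} ↪ KnEdge n :=
  ⟨fun x => pair a x x.2.symm, fun x y h => Subtype.ext <|
    (by simpa [y.2] using ((eq_pair_iff y.2.symm).1 h).2 : (y : Fin n) = x).symm⟩

@[simp] lemma incident_val (a : Fin n) (x : {x // x ≠ a}) : (incident a x).1 = {a, x.1} := rfl

lemma exists_incident_eq_iff {a : Fin n} {s : KnEdge n} : (∃ x, incident a x = s) ↔ a ∈ s.1 := by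
  refine ⟨fun ⟨x, hx⟩ => hx ▸ by simp, fun ha => ?_⟩
  obtain ⟨x, hxs, hxa⟩ := Finset.exists_mem_ne (s.2.symm ▸ one_lt_two) a
  exact ⟨⟨x, hxa⟩, ((eq_pair_iff hxa.symm).2 ⟨ha, hxs⟩).symm⟩

end KnEdge

open KnEdge

lemma nodup_five_iff {α : Type*} {a b c d e : α} :
    [a, b, c, d, e].Nodup ↔
      (a ≠ b ∧ a ≠ c ∧ a ≠ d ∧ a ≠ e) ∧ (b ≠ c ∧ b ≠ d ∧ b ≠ e) ∧ (c ≠ d ∧ c ≠ e) ∧ d ≠ e := by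
  simp

lemma qv_adj {a : Fin n} {s t : KnEdge n} : (Qv a).Adj s t ↔ s ≠ t ∧ a ∈ s.1 ∧ a ∈ t.1 := by
  simp [Qv, and_comm]

lemma dstar_eq_sup (u v : Fin n) : Dstar u v = DstarHalf u v ⊔ DstarHalf v u := by
  have key (s t : KnEdge n) : (s.1 = {u, v} ∧ ¬Disjoint s.1 t.1) ↔
      (s.1 = {u, v} ∧ u ∈ t.1) ∨ (s.1 = {v, u} ∧ v ∈ t.1) := by
    rw [Finset.pair_comm v u, ← and_or_left]
    exact and_congr_right fun hs => by
      simp [hs, Finset.disjoint_insert_left, or_iff_not_imp_left]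
  ext s t
  simp only [Dstar, DstarHalf, sup_adj, fromRel_adj, key]
  tauto

lemma dstarHalf_le_qv (u v : Fin n) : DstarHalf u v ≤ Qv u := by
  rintro s t ⟨hst, ⟨hs, hut⟩ | ⟨ht, hus⟩⟩ <;> refine qv_adj.2 ⟨hst, ?_, ?_⟩ <;> simp [*]

lemma ku_triple_le {u v w : Fin n} (huv : u ≠ v) (huw : u ≠ w) (hvw : v ≠ w) :
    KU {u, v, w} ≤ Qv u ⊔ DstarHalf v u ⊔ edge (pair u w huw) (pair v w hvw) := by
  have cross {s t : KnEdge n} (hst : s ≠ t) (hs : s.1 ⊆ {u, v, w}) (ht : t.1 ⊆ {u, v, w})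
      (hus : u ∈ s.1) (hut : u ∉ t.1) :
      (Qv u ⊔ DstarHalf v u ⊔ edge (pair u w huw) (pair v w hvw)).Adj s t := by
    have htvw : t.1 = {v, w} := val_eq_of_subset_triple ht hut
    by_cases hvs : v ∈ s.1
    · refine Or.inl (Or.inr <| (fromRel_adj ..).2 ⟨hst, Or.inl ⟨?_, by simp [htvw]⟩⟩)
      exact (val_eq_pair_iff huv.symm).2 ⟨hvs, hus⟩
    · have hsuw : s.1 = {u, w} := val_eq_of_subset_triple (Finset.insert_comm u v {w} ▸ hs) hvs
      exact Or.inr ((edge_adj ..).2 ⟨Or.inl ⟨Subtype.ext hsuw, Subtype.ext htvw⟩, hst⟩)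
  rintro s t ⟨hst, ⟨hs, ht, -⟩ | ⟨ht, hs, -⟩⟩ <;>
  · by_cases hus : u ∈ s.1 <;> by_cases hut : u ∈ t.1
    · exact Or.inl (Or.inl (qv_adj.2 ⟨hst, hus, hut⟩))
    · exact cross hst hs ht hus hut
    · exact (cross hst.symm ht hs hut hus).symm
    · exact absurd (Subtype.ext ((val_eq_of_subset_triple hs hus).trans
        (val_eq_of_subset_triple ht hut).symm)) hst

lemma edge_le_ku_triple {u v w : Fin n} (huw : u ≠ w) (hvw : v ≠ w) :
    edge (pair u w huw) (pair v w hvw) ≤ KU {u, v, w} := by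
  intro s t h
  obtain ⟨⟨rfl, rfl⟩ | ⟨rfl, rfl⟩, hst⟩ := (edge_adj ..).1 h <;> refine ⟨hst, ?_⟩ <;>
    simp [Finset.insert_subset_iff]

def typeAGraph (a b c d e : Fin n) : SimpleGraph (KnEdge n) :=
  Qv a ⊔ Dstar a b ⊔ Dstar a d ⊔ KU {a, b, c} ⊔ KU {a, d, e}

lemma qv_le_typeAGraph {a b c d e : Fin n} : Qv a ≤ typeAGraph a b c d e :=
  le_sup_left.trans (le_sup_left.trans (le_sup_left.trans le_sup_left))

lemma typeAGraph_eq {a b c d e : Fin n} (hab : a ≠ b) (hac : a ≠ c) (had : a ≠ d)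
    (hae : a ≠ e) (hbc : b ≠ c) (hde : d ≠ e) :
    typeAGraph a b c d e = Qv a ⊔ DstarHalf b a ⊔ DstarHalf d a ⊔
      edge (pair a c hac) (pair b c hbc) ⊔ edge (pair a e hae) (pair d e hde) := by
  ext s t
  have h₁ := @dstarHalf_le_qv _ a b s t
  have h₂ := @dstarHalf_le_qv _ a d s t
  have h₃ := @ku_triple_le _ a b c hab hac hbc s t
  have h₄ := @ku_triple_le _ a d e had hae hde s t
  have h₅ := @edge_le_ku_triple _ a b c hac hbc s t
  have h₆ := @edge_le_ku_triple _ a d e hae hde s t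
  simp only [typeAGraph, dstar_eq_sup, sup_adj] at h₃ h₄ ⊢
  grind

lemma ncard_edgeSet_top (V : Type*) [Finite V] :
    (⊤ : SimpleGraph V).edgeSet.ncard = (Nat.card V).choose 2 := by
  classical
  have := Fintype.ofFinite V
  rw [← coe_edgeFinset, Set.ncard_coe_finset, card_edgeFinset_top_eq_card_choose_two,
    Nat.card_eq_fintype_card]

lemma ncard_edgeSet_sup {V : Type*} [Finite V] {G H : SimpleGraph V} (h : Disjoint G H) :
    (G ⊔ H).edgeSet.ncard = G.edgeSet.ncard + H.edgeSet.ncard := by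
  rw [edgeSet_sup, Set.ncard_union_eq (disjoint_edgeSet.2 h)]

lemma ncard_edgeSet_sup_edge {V : Type*} [Finite V] {G : SimpleGraph V} {u v : V} (huv : u ≠ v)
    (h : ¬G.Adj u v) : (G ⊔ edge u v).edgeSet.ncard = G.edgeSet.ncard + 1 := by
  rw [ncard_edgeSet_sup ((disjoint_edge G).2 h), edgeSet_edge_of_ne huv, Set.ncard_singleton]

lemma qv_eq_map (a : Fin n) : Qv a = (⊤ : SimpleGraph {x // x ≠ a}).map (incident a) := by
  ext s t
  simp only [qv_adj, map_adj, top_adj, ← exists_incident_eq_iff]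
  constructor
  · rintro ⟨hst, ⟨x, rfl⟩, ⟨y, rfl⟩⟩
    exact ⟨x, y, fun h => hst (h ▸ rfl), rfl, rfl⟩
  · rintro ⟨x, y, hxy, rfl, rfl⟩
    exact ⟨(incident a).injective.ne hxy, ⟨x, rfl⟩, ⟨y, rfl⟩⟩

lemma ncard_edgeSet_qv (a : Fin n) : (Qv a).edgeSet.ncard = (n - 1).choose 2 := by
  rw [qv_eq_map, edgeSet_map, Set.ncard_image_of_injective _ (incident a).sym2Map.injective,
    ncard_edgeSet_top, Nat.card_eq_fintype_card, Fintype.card_subtype_compl, Fintype.card_fin,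
    Fintype.card_unique]

lemma edgeSet_dstarHalf {u v : Fin n} (hvu : v ≠ u) :
    (DstarHalf u v).edgeSet =
      (fun y => s(incident u ⟨v, hvu⟩, incident u y)) '' {⟨v, hvu⟩}ᶜ := by
  ext e
  constructor
  · induction e using Sym2.ind with | h s t => ?_
    rintro ⟨hst, ⟨hs, hut⟩ | ⟨ht, hus⟩⟩
    · obtain ⟨y, rfl⟩ := exists_incident_eq_iff.2 hut
      obtain rfl : incident u ⟨v, hvu⟩ = s := Subtype.ext hs.symm
      exact ⟨y, fun h => hst (h ▸ rfl), rfl⟩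
    · obtain ⟨y, rfl⟩ := exists_incident_eq_iff.2 hus
      obtain rfl : incident u ⟨v, hvu⟩ = t := Subtype.ext ht.symm
      exact ⟨y, fun h => hst (h ▸ rfl), Sym2.eq_swap⟩
  · rintro ⟨y, hy, rfl⟩
    exact ⟨fun h => hy ((incident u).injective h).symm, Or.inl ⟨rfl, by simp⟩⟩

lemma ncard_edgeSet_dstarHalf {u v : Fin n} (hvu : v ≠ u) :
    (DstarHalf u v).edgeSet.ncard = n - 2 := by
  rw [edgeSet_dstarHalf hvu,
    Set.ncard_image_of_injective _ fun y z h => (incident u).injective (Sym2.congr_right.1 h),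
    Set.ncard_compl, Set.ncard_singleton, Nat.card_eq_fintype_card, Fintype.card_subtype_compl,
    Fintype.card_fin, Fintype.card_unique]
  omega

lemma disjoint_qv_dstarHalf {a b : Fin n} (hab : a ≠ b) : Disjoint (Qv a) (DstarHalf b a) := by
  refine disjoint_iff_inf_le.2 fun s t ⟨h₁, _, h₂⟩ => ?_
  obtain ⟨hst, has, hat⟩ := qv_adj.1 h₁
  rcases h₂ with ⟨hs, hbt⟩ | ⟨ht, hbs⟩
  · exact hst (Subtype.ext (hs.trans ((val_eq_pair_iff hab.symm).2 ⟨hbt, hat⟩).symm))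
  · exact hst (Subtype.ext (((val_eq_pair_iff hab.symm).2 ⟨hbs, has⟩).trans ht.symm))

lemma disjoint_dstarHalf {a b d : Fin n} (had : a ≠ d) (hbd : b ≠ d) :
    Disjoint (DstarHalf b a) (DstarHalf d a) := by
  refine disjoint_iff_inf_le.2 fun s t ⟨⟨_, h₁⟩, _, h₂⟩ => ?_
  have key (x : KnEdge n) (hx : x.1 = {b, a}) (hdx : d ∈ x.1) : False := by
    simp [hx, hbd.symm, had.symm] at hdx
  rcases h₁ with ⟨h, -⟩ | ⟨h, -⟩ <;> rcases h₂ with ⟨h', hd⟩ | ⟨h', hd⟩ <;>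
    first | exact key _ h hd | exact key _ h (by simp [h'])

lemma choose_two_add_two_mul (m : ℕ) : m.choose 2 + 2 * m = (m + 3) * m / 2 := by
  rcases m with _ | k
  · rfl
  rw [Nat.choose_two_right, Nat.add_sub_cancel,
    show (k + 1 + 3) * (k + 1) = (k + 1) * k + 2 * (2 * (k + 1)) by ring,
    Nat.add_mul_div_left _ _ two_pos]

lemma ncard_edgeSet_typeAGraph {a b c d e : Fin n} (h : [a, b, c, d, e].Nodup) :
    (typeAGraph a b c d e).edgeSet.ncard = (n + 2) * (n - 1) / 2 := by
  obtain ⟨⟨hab, hac, had, hae⟩, ⟨hbc, hbd, hbe⟩, ⟨hcd, hce⟩, hde⟩ := nodup_five_iff.1 h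
  rw [typeAGraph_eq hab hac had hae hbc hde, ncard_edgeSet_sup_edge, ncard_edgeSet_sup_edge,
    ncard_edgeSet_sup (disjoint_sup_left.2 ⟨disjoint_qv_dstarHalf had, disjoint_dstarHalf had hbd⟩),
    ncard_edgeSet_sup (disjoint_qv_dstarHalf hab), ncard_edgeSet_qv, ncard_edgeSet_dstarHalf hab,
    ncard_edgeSet_dstarHalf had, show n + 2 = n - 1 + 3 by omega, ← choose_two_add_two_mul]
  · omega
  all_goals simp [qv_adj, DstarHalf, edge_adj, eq_pair_iff, val_eq_pair_iff, *, hab.symm,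
    hac.symm, had.symm, hae.symm, hbd.symm, hcd.symm]

lemma isIntervalGraph_compl_of_int {V : Type*} (G : SimpleGraph V) (lo hi : V → ℤ)
    (hle : ∀ v, lo v ≤ hi v) (hadj : ∀ u v, u ≠ v → (G.Adj u v ↔ hi v < lo u ∨ hi u < lo v)) :
    IsIntervalGraph Gᶜ := by
  refine ⟨fun v => lo v, fun v => hi v, fun v => Int.cast_le.2 (hle v), fun u v huv => ?_⟩
  rw [compl_adj, hadj u v huv, Set.Icc_inter_Icc, Set.nonempty_Icc]
  simp [huv, hle, and_comm]

namespace TypeA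

def pos (b c d e x : Fin n) : ℤ :=
  if x = b then -2 else if x = c then -1 else if x = e then n else if x = d then n + 1 else x

def leftEnd (b c : Fin n) (t : Finset (Fin n)) : ℤ :=
  if b ∈ t then if c ∈ t then 0 else -1 else -2

def rightEnd (d e : Fin n) (t : Finset (Fin n)) : ℤ :=
  if d ∈ t then if e ∈ t then n - 1 else n else n + 1

def lower (a b c d e : Fin n) (s : KnEdge n) : ℤ :=
  if a ∈ s.1 then ∑ x ∈ s.1.erase a, pos b c d e x else leftEnd b c s.1

def upper (a b c d e : Fin n) (s : KnEdge n) : ℤ :=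
  if a ∈ s.1 then ∑ x ∈ s.1.erase a, pos b c d e x else rightEnd d e s.1

lemma pos_injective (b c d e : Fin n) : Function.Injective (pos b c d e) := by
  intro x y h
  unfold pos at h
  split_ifs at h <;> omega

lemma pos_lt_leftEnd_iff (b c d e x : Fin n) (t : Finset (Fin n)) :
    pos b c d e x < leftEnd b c t ↔ (x = b ∧ b ∈ t) ∨ (x = c ∧ b ∈ t ∧ c ∈ t) := by
  unfold pos leftEnd
  split_ifs <;> simp_all <;> omega

lemma rightEnd_lt_pos_iff {b c d e : Fin n} (hbd : b ≠ d) (hbe : b ≠ e) (hcd : c ≠ d)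
    (hce : c ≠ e) (hde : d ≠ e) (x : Fin n) (t : Finset (Fin n)) :
    rightEnd d e t < pos b c d e x ↔ (x = d ∧ d ∈ t) ∨ (x = e ∧ d ∈ t ∧ e ∈ t) := by
  have := x.isLt
  unfold pos rightEnd
  split_ifs <;> subst_vars <;> simp_all <;> omega

lemma leftEnd_le_rightEnd (b c d e : Fin n) (s t : Finset (Fin n)) :
    leftEnd b c s ≤ rightEnd d e t := by
  have := d.isLt
  unfold leftEnd rightEnd
  split_ifs <;> omega

lemma lower_incident (a b c d e : Fin n) (x : {x // x ≠ a}) :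
    lower a b c d e (incident a x) = pos b c d e x := by
  simp [lower, x.2.symm]

lemma upper_incident (a b c d e : Fin n) (x : {x // x ≠ a}) :
    upper a b c d e (incident a x) = pos b c d e x := by
  simp [upper, x.2.symm]

lemma lower_le_upper (a b c d e : Fin n) (s : KnEdge n) :
    lower a b c d e s ≤ upper a b c d e s := by
  unfold lower upper
  split_ifs
  exacts [le_rfl, leftEnd_le_rightEnd ..]

end TypeA

open TypeA

section

variable {a b c d e : Fin n}

lemma typeAGraph_not_adj (h : [a, b, c, d, e].Nodup) {s t : KnEdge n} (has : a ∉ s.1)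
    (hat : a ∉ t.1) : ¬(typeAGraph a b c d e).Adj s t := by
  obtain ⟨⟨hab, hac, had, hae⟩, ⟨hbc, -, -⟩, -, hde⟩ := nodup_five_iff.1 h
  simp [typeAGraph_eq hab hac had hae hbc hde, qv_adj, DstarHalf, edge_adj, eq_pair_iff,
    val_eq_pair_iff, *, hab.symm, had.symm]

lemma typeAGraph_adj_incident_iff (h : [a, b, c, d, e].Nodup) (x : {x // x ≠ a})
    {t : KnEdge n} (hat : a ∉ t.1) :
    (typeAGraph a b c d e).Adj (incident a x) t ↔ (x = b ∧ b ∈ t.1) ∨ (x = d ∧ d ∈ t.1) ∨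
      (x = c ∧ b ∈ t.1 ∧ c ∈ t.1) ∨ (x = e ∧ d ∈ t.1 ∧ e ∈ t.1) := by
  obtain ⟨⟨hab, hac, had, hae⟩, ⟨hbc, hbd, hbe⟩, ⟨hcd, hce⟩, hde⟩ := nodup_five_iff.1 h
  have hne : incident a x ≠ t := fun h => hat (h ▸ by simp)
  simp only [typeAGraph_eq hab hac had hae hbc hde, sup_adj, qv_adj, DstarHalf, fromRel_adj,
    edge_adj, eq_pair_iff, val_eq_pair_iff hab.symm, val_eq_pair_iff had.symm, incident_val,
    Finset.mem_insert, Finset.mem_singleton]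
  grind

lemma typeAGraph_adj_incident_iff_lt (h : [a, b, c, d, e].Nodup) (x : {x // x ≠ a})
    {t : KnEdge n} (hat : a ∉ t.1) :
    (typeAGraph a b c d e).Adj (incident a x) t ↔
      upper a b c d e t < lower a b c d e (incident a x) ∨
        upper a b c d e (incident a x) < lower a b c d e t := by
  obtain ⟨-, ⟨-, hbd, hbe⟩, ⟨hcd, hce⟩, hde⟩ := nodup_five_iff.1 h
  rw [typeAGraph_adj_incident_iff h x hat, lower_incident, upper_incident, lower, upper,
    if_neg hat, if_neg hat, rightEnd_lt_pos_iff hbd hbe hcd hce hde, pos_lt_leftEnd_iff]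
  tauto

lemma typeAGraph_adj_iff (h : [a, b, c, d, e].Nodup) {s t : KnEdge n} (hst : s ≠ t) :
    (typeAGraph a b c d e).Adj s t ↔
      upper a b c d e t < lower a b c d e s ∨ upper a b c d e s < lower a b c d e t := by
  by_cases has : a ∈ s.1 <;> by_cases hat : a ∈ t.1
  · obtain ⟨x, rfl⟩ := exists_incident_eq_iff.2 has
    obtain ⟨y, rfl⟩ := exists_incident_eq_iff.2 hat
    have hxy : x ≠ y := fun hxy => hst (hxy ▸ rfl)
    rw [lower_incident, lower_incident, upper_incident, upper_incident]
    refine iff_of_true (qv_le_typeAGraph (qv_adj.2 ⟨hst, has, hat⟩)) ?_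
    exact ((pos_injective b c d e).ne (Subtype.val_injective.ne hxy)).lt_or_gt.symm
  · obtain ⟨x, rfl⟩ := exists_incident_eq_iff.2 has
    exact typeAGraph_adj_incident_iff_lt h x hat
  · obtain ⟨y, rfl⟩ := exists_incident_eq_iff.2 hat
    rw [adj_comm, or_comm]
    exact typeAGraph_adj_incident_iff_lt h y has
  · refine iff_of_false (typeAGraph_not_adj h has hat) ?_
    simp only [lower, upper, if_neg has, if_neg hat, not_or, not_lt]
    exact ⟨leftEnd_le_rightEnd .., leftEnd_le_rightEnd ..⟩

lemma isIntervalGraph_compl_typeAGraph (h : [a, b, c, d, e].Nodup) :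
    IsIntervalGraph (typeAGraph a b c d e)ᶜ :=
  isIntervalGraph_compl_of_int _ _ _ (lower_le_upper a b c d e) fun _ _ => typeAGraph_adj_iff h

end

end

theorem type_a_interval_order_general (n : ℕ) (a b c d e : Fin n)
    (hdist : ([a, b, c, d, e] : List (Fin n)).Nodup) :
    IsIntervalGraph (Qv a ⊔ Dstar a b ⊔ Dstar a d ⊔ KU {a, b, c} ⊔ KU {a, d, e})ᶜ ∧
    (Qv a ⊔ Dstar a b ⊔ Dstar a d ⊔ KU {a, b, c} ⊔ KU {a, d, e}).edgeSet.ncard =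
      (n + 2) * (n - 1) / 2 :=
  ⟨isIntervalGraph_compl_typeAGraph hdist, ncard_edgeSet_typeAGraph hdist⟩

/-- The subgraph of `L(K_n)` with edge set `E_{a,b,c,d,e}` is an interval-order graph with
`(n+2)(n-1)/2` edges. -/
theorem type_a_interval_order (n : ℕ) (hn : 5 ≤ n) (a b c d e : Fin n)
    (hdist : ([a, b, c, d, e] : List (Fin n)).Nodup) :
    IsIntervalGraph (Qv a ⊔ Dstar a b ⊔ Dstar a d ⊔ KU {a, b, c} ⊔ KU {a, d, e})ᶜ ∧
    (Qv a ⊔ Dstar a b ⊔ Dstar a d ⊔ KU {a, b, c} ⊔ KU {a, d, e}).edgeSet.ncard =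
      (n + 2) * (n - 1) / 2 :=
  type_a_interval_order_general n a b c d e hdist
end

section
/- For n ≥ 5 and distinct vertices a,b,c,d of K_n, the subgraph of L(K_n) with edge set E_{a,b,c,d} = δ_{ab} ∪ δ_{ad} ∪ K_{{a,b,c,d}} is an interval-order graph and has exactly 4(n-1) edges. -/
open SimpleGraph

/-!
Whether two edges `e, f` of `K_n` are adjacent in `E_{a,b,c,d}` depends only on their traces
`e ∩ {a,b,c,d}` and `f ∩ {a,b,c,d}`: the condition `e ≠ f` is seen by the traces as soon as one
of `e, f` lies inside `{a,b,c,d}`, and every edge of `E_{a,b,c,d}` has such an end. Labelling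
`a, b, c, d` as `0, 1, 2, 3`, the graph is therefore the pullback of one fixed graph on the
subsets of `Fin 4` of size at most two. That finite graph is the disjointness graph of explicit
integer intervals, and it has 12 edges between traces of size two and 4 edges between a trace of
size two and one of size one; both facts are checked by evaluation. Intervals pull back, a trace
of size two has exactly one preimage and a trace of size one has `n - 4`, so there are
`12 + 4 (n - 4) = 4 (n - 1)` edges.
-/

open Finset

section Comap

variable {V K : Type*}

theorem isIntervalGraph_compl_comap (Q : SimpleGraph K) (κ : V → K) (I : K → ℤ × ℤ)
    (hI : ∀ i, (I i).1 ≤ (I i).2)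
    (hQ : ∀ i j, Q.Adj i j ↔ (I i).2 < (I j).1 ∨ (I j).2 < (I i).1) :
    IsIntervalGraph (Q.comap κ)ᶜ := by
  refine ⟨fun v => (I (κ v)).1, fun v => (I (κ v)).2, fun v => Int.cast_le.mpr (hI (κ v)),
    fun u v huv => ?_⟩
  rw [compl_adj, comap_adj, hQ, Set.Icc_inter_Icc, Set.nonempty_Icc, max_le_iff, le_min_iff,
    le_min_iff]
  simp only [ne_eq, huv, not_false_eq_true, true_and]
  have := hI (κ u)
  have := hI (κ v)
  constructor <;> intro h <;> norm_cast at h ⊢ <;> omega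

theorem two_mul_card_edgeFinset_comap [Fintype V] [Fintype K] [DecidableEq K]
    (Q : SimpleGraph K) [DecidableRel Q.Adj] (κ : V → K) :
    2 * #(Q.comap κ).edgeFinset =
      ∑ i, ∑ j, if Q.Adj i j then #{v | κ v = i} * #{v | κ v = j} else 0 := by
  have hdeg (u : V) :
      (Q.comap κ).degree u = ∑ j, if Q.Adj (κ u) j then #{v | κ v = j} else 0 := by
    rw [← card_neighborFinset_eq_degree,
      card_eq_sum_card_fiberwise (f := κ) (t := univ) (fun _ _ => mem_coe.2 (mem_univ _))]
    refine sum_congr rfl fun j _ => ?_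
    split_ifs with h
    · congr 1; ext v; simp +contextual [h]
    · rw [card_eq_zero, filter_eq_empty_iff]
      intro v hv hvj
      simp_all
  rw [← sum_degrees_eq_twice_card_edges]
  simp_rw [hdeg]
  rw [← sum_fiberwise' univ κ fun i => ∑ j, if Q.Adj i j then #{v | κ v = j} else 0]
  simp_rw [sum_const, smul_eq_mul, mul_sum, mul_ite, mul_zero]

end Comap

section PairTrace

variable {α β : Type*} (φ : α ↪ β)

theorem card_preimage_eq_iff_subset_map [Fintype α] {e : Finset β} :
    #(e.preimage φ φ.injective.injOn) = #e ↔ e ⊆ univ.map φ := by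
  classical
  rw [card_preimage, card_filter_eq_iff]
  simp [subset_iff]

theorem map_preimage_of_subset_map [Fintype α] {e : Finset β} (he : e ⊆ univ.map φ) :
    (e.preimage φ φ.injective.injOn).map φ = e := by
  classical
  rw [map_eq_image, image_preimage, filter_true_of_mem]
  intro x hx
  simpa using he hx

noncomputable def pairTrace (e : {s : Finset β // #s = 2}) : Finset α :=
  e.1.preimage φ φ.injective.injOn

theorem subset_map_iff_card_pairTrace [Fintype α] {e : {s : Finset β // #s = 2}} :
    e.1 ⊆ univ.map φ ↔ #(pairTrace φ e) = 2 := by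
  rw [← card_preimage_eq_iff_subset_map, e.2, pairTrace]

theorem pairTrace_eq_iff_eq_map [Fintype α] {e : {s : Finset β // #s = 2}} {s : Finset α}
    (hs : #s = 2) : pairTrace φ e = s ↔ e.1 = s.map φ := by
  constructor
  · rintro rfl
    exact (map_preimage_of_subset_map φ ((subset_map_iff_card_pairTrace φ).2 hs)).symm
  · intro h
    simp only [pairTrace, h, preimage_map]

theorem pairTrace_eq_pair_iff [Fintype α] [DecidableEq α] [DecidableEq β]
    {e : {s : Finset β // #s = 2}} {i j : α} (hij : i ≠ j) :
    pairTrace φ e = {i, j} ↔ e.1 = {φ i, φ j} := by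
  rw [pairTrace_eq_iff_eq_map φ (card_pair hij), map_insert, map_singleton]

theorem card_pairTrace_le (e : {s : Finset β // #s = 2}) : #(pairTrace φ e) ≤ 2 := by
  classical
  rw [pairTrace, card_preimage]
  exact (card_filter_le _ _).trans_eq e.2

theorem ne_and_not_disjoint_iff_pairTrace [Fintype α] {e f : {s : Finset β // #s = 2}}
    (h : #(pairTrace φ e) = 2 ∨ #(pairTrace φ f) = 2) :
    e ≠ f ∧ ¬Disjoint e.1 f.1 ↔
      pairTrace φ e ≠ pairTrace φ f ∧ ¬Disjoint (pairTrace φ e) (pairTrace φ f) := by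
  wlog hcard : #(pairTrace φ e) = 2 generalizing e f
  · have := this h.symm (h.resolve_left hcard)
    rwa [ne_comm, disjoint_comm, ne_comm (a := pairTrace φ f), disjoint_comm (a := pairTrace φ f)]
      at this
  have heq : e.1 = (pairTrace φ e).map φ := (pairTrace_eq_iff_eq_map φ hcard).1 rfl
  refine and_congr (not_congr ⟨congrArg _, fun hef => Subtype.ext ?_⟩) (not_congr ?_)
  · rw [heq, ← (pairTrace_eq_iff_eq_map φ hcard).1 hef.symm]
  · rw [heq]
    simp [pairTrace, Finset.disjoint_left]

theorem card_pairTrace_fiber_of_card_eq_two [Fintype α] [DecidableEq α] [Fintype β] {s : Finset α}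
    (hs : #s = 2) : #{e | pairTrace φ e = s} = 1 := by
  rw [card_eq_one]
  refine ⟨⟨s.map φ, by rw [card_map, hs]⟩, ?_⟩
  ext e
  simp [pairTrace_eq_iff_eq_map φ hs, Subtype.ext_iff]

theorem card_pairTrace_fiber_of_card_eq_one [Fintype α] [DecidableEq α] [Fintype β]
    {s : Finset α} (hs : #s = 1) : #{e | pairTrace φ e = s} = Fintype.card β - Fintype.card α := by
  classical
  obtain ⟨i, rfl⟩ := card_eq_one.1 hs
  have hout : ∀ {x}, x ∈ (univ.map φ)ᶜ → ∀ j, φ j ≠ x := by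
    intro x hx j hj
    exact mem_compl.1 hx (hj ▸ mem_map_of_mem φ (mem_univ j))
  rw [← card_univ (α := α), ← card_map φ, ← card_compl]
  refine (card_bij (fun x hx => ⟨{φ i, x}, card_pair (hout hx i)⟩) ?_ ?_ ?_).symm
  · intro x hx
    rw [mem_filter]
    refine ⟨mem_univ _, ?_⟩
    ext j
    simp [pairTrace, hout hx j]
  · intro x hx y hy hxy
    have hx' : x ∈ ({φ i, y} : Finset β) := by
      rw [← Subtype.mk.inj hxy]
      exact mem_insert_of_mem (mem_singleton_self x)
    simpa [(hout hx i).symm] using hx'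
  · intro e he
    have hi : φ i ∈ e.1 := by
      have : i ∈ pairTrace φ e := by rw [(mem_filter.1 he).2]; exact mem_singleton_self i
      simpa [pairTrace] using this
    obtain ⟨x, hx⟩ :=
      card_eq_one.1 (by rw [card_erase_of_mem hi, e.2] : #(e.1.erase (φ i)) = 1)
    have hxe : x ∈ e.1.erase (φ i) := hx ▸ mem_singleton_self x
    refine ⟨x, mem_compl.2 fun hmem => ?_, Subtype.ext ?_⟩
    · obtain ⟨j, -, rfl⟩ := mem_map.1 hmem
      have : j ∈ pairTrace φ e := by simpa [pairTrace] using mem_of_mem_erase hxe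
      rw [(mem_filter.1 he).2, mem_singleton] at this
      exact (ne_of_mem_erase hxe) (this ▸ rfl)
    · change {φ i, x} = e.1
      rw [← hx, insert_erase hi]

end PairTrace

theorem dstar_adj {n : ℕ} {u v : Fin n} {e f : {s : Finset (Fin n) // #s = 2}} :
    (Dstar u v).Adj e f ↔ e ≠ f ∧ ¬Disjoint e.1 f.1 ∧ (e.1 = {u, v} ∨ f.1 = {u, v}) := by
  simp only [Dstar, fromRel_adj, disjoint_comm (a := f.1)]
  tauto

theorem kU_adj {n : ℕ} {U : Finset (Fin n)} {e f : {s : Finset (Fin n) // #s = 2}} :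
    (KU U).Adj e f ↔ e ≠ f ∧ ¬Disjoint e.1 f.1 ∧ e.1 ⊆ U ∧ f.1 ⊆ U := by
  simp only [KU, fromRel_adj, disjoint_comm (a := f.1)]
  tauto

-- `{0, 1}` and `{0, 3}` are the traces of `ab` and `ad`; the traces of size two are the edges of
-- `K_n` inside `{a, b, c, d}`.
def typeBTraceGraph : SimpleGraph (Finset (Fin 4)) where
  Adj s t := s ≠ t ∧ #s ≤ 2 ∧ #t ≤ 2 ∧ ¬Disjoint s t ∧
    (s = {0, 1} ∨ t = {0, 1} ∨ s = {0, 3} ∨ t = {0, 3} ∨ (#s = 2 ∧ #t = 2))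
  symm := ⟨fun _ _ ⟨hst, hs, ht, hd, h⟩ =>
    ⟨hst.symm, ht, hs, fun h' => hd h'.symm, by tauto⟩⟩
  loopless := ⟨fun _ h => h.1 rfl⟩

instance : DecidableRel typeBTraceGraph.Adj := fun s t => by
  unfold typeBTraceGraph; infer_instance

def typeBTraceInterval (s : Finset (Fin 4)) : ℤ × ℤ :=
  if s = {0, 1} then (0, 0) else if s = {0, 3} then (10, 10) else if s = {0, 2} then (2, 8)
  else if s = {1, 3} then (3, 7) else if s = {1, 2} then (9, 11) else if s = {2, 3} then (-1, 1)
  else if s = {0} then (1, 9) else if s = {1} then (1, 20) else if s = {3} then (-10, 9)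
  else (-10, 20)

theorem typeBTraceInterval_fst_le_snd (s : Finset (Fin 4)) :
    (typeBTraceInterval s).1 ≤ (typeBTraceInterval s).2 := by
  revert s; decide

theorem typeBTraceGraph_adj_iff (s t : Finset (Fin 4)) :
    typeBTraceGraph.Adj s t ↔
      (typeBTraceInterval s).2 < (typeBTraceInterval t).1 ∨
        (typeBTraceInterval t).2 < (typeBTraceInterval s).1 := by
  revert s t; decide

theorem card_of_typeBTraceGraph_adj {s t : Finset (Fin 4)} (h : typeBTraceGraph.Adj s t) :
    (#s = 2 ∧ #t = 2) ∨ (#s = 2 ∧ #t = 1) ∨ (#s = 1 ∧ #t = 2) := by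
  revert s t; decide

theorem dstar_sup_dstar_sup_kU_eq_comap {n : ℕ} (φ : Fin 4 ↪ Fin n) :
    Dstar (φ 0) (φ 1) ⊔ Dstar (φ 0) (φ 3) ⊔ KU (univ.map φ) =
      typeBTraceGraph.comap (pairTrace φ) := by
  ext e f
  have h01 (g : {s : Finset (Fin n) // #s = 2}) : g.1 = {φ 0, φ 1} ↔ pairTrace φ g = {0, 1} :=
    (pairTrace_eq_pair_iff φ (by decide)).symm
  have h03 (g : {s : Finset (Fin n) // #s = 2}) : g.1 = {φ 0, φ 3} ↔ pairTrace φ g = {0, 3} :=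
    (pairTrace_eq_pair_iff φ (by decide)).symm
  have key := ne_and_not_disjoint_iff_pairTrace φ (e := e) (f := f)
  have hle := card_pairTrace_le φ e
  have hle' := card_pairTrace_le φ f
  simp only [sup_adj, dstar_adj, kU_adj, comap_adj, h01, h03, subset_map_iff_card_pairTrace]
  generalize pairTrace φ e = s at *
  generalize pairTrace φ f = t at *
  have hmeet (h : s = {0, 1} ∨ t = {0, 1} ∨ s = {0, 3} ∨ t = {0, 3} ∨ (#s = 2 ∧ #t = 2)) :
      #s = 2 ∨ #t = 2 := by
    rcases h with rfl | rfl | rfl | rfl | ⟨h, -⟩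
    exacts [Or.inl rfl, Or.inr rfl, Or.inl rfl, Or.inr rfl, Or.inl h]
  change _ ↔ s ≠ t ∧ #s ≤ 2 ∧ #t ≤ 2 ∧ ¬Disjoint s t ∧ _
  simp only [hle, hle', true_and]
  rw [← and_assoc (a := s ≠ t), ← and_congr_left fun h => key (hmeet h)]
  tauto

theorem card_edgeFinset_comap_typeBTraceGraph {n : ℕ} (φ : Fin 4 ↪ Fin n) :
    #(typeBTraceGraph.comap (pairTrace φ)).edgeFinset = 4 * (n - 1) := by
  have hn : 4 ≤ n := by simpa using Fintype.card_le_of_embedding φ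
  have hfiber (s t : Finset (Fin 4)) :
      (if typeBTraceGraph.Adj s t then
          #{e | pairTrace φ e = s} * #{e | pairTrace φ e = t} else 0) =
        (if typeBTraceGraph.Adj s t ∧ #s = 2 ∧ #t = 2 then 1 else 0) +
          (n - 4) * if typeBTraceGraph.Adj s t ∧ #s + #t = 3 then 1 else 0 := by
    by_cases h : typeBTraceGraph.Adj s t
    · rcases card_of_typeBTraceGraph_adj h with ⟨hs, ht⟩ | ⟨hs, ht⟩ | ⟨hs, ht⟩ <;>
        simp [h, hs, ht, card_pairTrace_fiber_of_card_eq_two, card_pairTrace_fiber_of_card_eq_one]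
    · simp [h]
  have h2 := two_mul_card_edgeFinset_comap typeBTraceGraph (pairTrace φ)
  simp_rw [hfiber, sum_add_distrib, ← mul_sum] at h2
  have h24 : ∑ s : Finset (Fin 4), ∑ t : Finset (Fin 4),
      (if typeBTraceGraph.Adj s t ∧ #s = 2 ∧ #t = 2 then 1 else 0) = 24 := by decide
  have h8 : ∑ s : Finset (Fin 4), ∑ t : Finset (Fin 4),
      (if typeBTraceGraph.Adj s t ∧ #s + #t = 3 then 1 else 0) = 8 := by decide
  rw [h24, h8] at h2
  omega

theorem type_b_interval_order_general (n : ℕ) (a b c d : Fin n)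
    (hdist : ([a, b, c, d] : List (Fin n)).Nodup) :
    IsIntervalGraph (Dstar a b ⊔ Dstar a d ⊔ KU {a, b, c, d})ᶜ ∧
    (Dstar a b ⊔ Dstar a d ⊔ KU {a, b, c, d}).edgeSet.ncard = 4 * (n - 1) := by
  obtain ⟨φ, rfl, rfl, rfl, rfl⟩ :
      ∃ φ : Fin 4 ↪ Fin n, φ 0 = a ∧ φ 1 = b ∧ φ 2 = c ∧ φ 3 = d :=
    ⟨⟨_, List.nodup_iff_injective_get.mp hdist⟩, rfl, rfl, rfl, rfl⟩
  have hU : ({φ 0, φ 1, φ 2, φ 3} : Finset (Fin n)) = univ.map φ := by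
    ext x
    simp [Fin.exists_fin_succ, eq_comm]
  rw [hU, dstar_sup_dstar_sup_kU_eq_comap]
  refine ⟨isIntervalGraph_compl_comap _ _ _ typeBTraceInterval_fst_le_snd
    typeBTraceGraph_adj_iff, ?_⟩
  rw [← coe_edgeFinset, Set.ncard_coe_finset, card_edgeFinset_comap_typeBTraceGraph]

/-- The subgraph of `L(K_n)` with edge set `E_{a,b,c,d}` is an interval-order graph with
`4(n-1)` edges. -/
theorem type_b_interval_order (n : ℕ) (hn : 5 ≤ n) (a b c d : Fin n)
    (hdist : ([a, b, c, d] : List (Fin n)).Nodup) :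
    IsIntervalGraph (Dstar a b ⊔ Dstar a d ⊔ KU {a, b, c, d})ᶜ ∧
    (Dstar a b ⊔ Dstar a d ⊔ KU {a, b, c, d}).edgeSet.ncard = 4 * (n - 1) :=
  type_b_interval_order_general n a b c d hdist
end

section
/- Let G be a graph and σ_i = (v_1,...,v_i) an i-prefix with |N^+(v_i)| = 2. Then there are at most two distinct inclusion-wise maximal interval-order subgraphs H of G of the form G^σ for orderings σ extending the prefix σ_i. -/
open SimpleGraph

/-!
Write `V_j` for `Vset G σ j`; these sets decrease in `j`, so for the two vertices `a, b` of `V_i`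
one of them, say `a`, leaves the sets `V_j` no later than the other. Every edge `u v` of `G^σ` with
`u` placed after the prefix then has `v ∈ V_i = {a, b}`, and `u` is adjacent to both `a` and `b`
when `v = a`. Hence `G^σ` is contained in `G^τ`, where `τ` lists the prefix, then the remaining
common neighbours of `a` and `b`, then the remaining neighbours of `b`, then everything else.
Since `τ` depends only on the prefix and on which of `a, b` comes first, and every `G^τ` has an
interval complement, a maximal `G^σ` must be one of these two graphs.
-/

open Function

section Ordering

variable {V : Type*} {n : ℕ} {G : SimpleGraph V}

lemma mem_vset_iff {σ : Fin n ≃ V} {j : Fin n} {v : V} :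
    v ∈ Vset G σ j ↔ ∀ w, σ.symm w ≤ j → G.Adj w v :=
  ⟨fun h w hw => by simpa using h _ hw, fun h l hl => h _ (by simpa using hl)⟩

lemma vset_antitone (σ : Fin n ≃ V) : Antitone (Vset G σ) :=
  fun _ _ hjk _ hw l hl => hw l (hl.trans hjk)

lemma vset_total (σ : Fin n ≃ V) (a b : V) :
    (∀ j, a ∈ Vset G σ j → b ∈ Vset G σ j) ∨ (∀ j, b ∈ Vset G σ j → a ∈ Vset G σ j) := by
  by_contra! h
  obtain ⟨⟨j, haj, hbj⟩, k, hbk, hak⟩ := h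
  rcases le_total j k with hjk | hkj
  · exact hbj (vset_antitone σ hjk hbk)
  · exact hak (vset_antitone σ hkj haj)

lemma vset_eq_of_prefix {σ σ₀ : Fin n ≃ V} {i : Fin n} (hσ : ∀ j, j ≤ i → σ j = σ₀ j) :
    Vset G σ i = Vset G σ₀ i := by
  ext w
  exact forall₂_congr fun j hj => by rw [hσ j hj]

lemma gsigma_adj {σ : Fin n ≃ V} {u v : V} :
    (Gsigma G σ).Adj u v ↔ u ≠ v ∧ (v ∈ Vset G σ (σ.symm u) ∨ u ∈ Vset G σ (σ.symm v)) := by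
  have hrel : ∀ x y, (∃ j, x = σ j ∧ y ∈ Vset G σ j) ↔ y ∈ Vset G σ (σ.symm x) := fun x y =>
    ⟨by rintro ⟨j, rfl, h⟩; simpa using h, fun h => ⟨_, (σ.apply_symm_apply x).symm, h⟩⟩
  simp only [Gsigma, SimpleGraph.fromRel_adj, hrel]

lemma gsigma_le (σ : Fin n ≃ V) : Gsigma G σ ≤ G := by
  intro u v huv
  obtain ⟨-, h | h⟩ := gsigma_adj.mp huv
  · simpa using h _ le_rfl
  · simpa using (h _ le_rfl).symm

lemma gsigma_le_gsigma {σ τ : Fin n ≃ V}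
    (h : ∀ u v, v ∈ Vset G σ (σ.symm u) → v ∈ Vset G τ (τ.symm u)) :
    Gsigma G σ ≤ Gsigma G τ := by
  intro u v huv
  rw [gsigma_adj] at huv ⊢
  exact ⟨huv.1, huv.2.imp (h u v) (h v u)⟩

variable (G) in
open Classical in
noncomputable def dropIndex (σ : Fin n ≃ V) (v : V) : ℕ :=
  Nat.find (p := fun m => ∃ j : Fin n, (j : ℕ) = m ∧ v ∉ Vset G σ j)
    ⟨_, σ.symm v, rfl, fun h => G.irrefl (v := v) (by simpa using h _ le_rfl)⟩

variable (G) in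
open Classical in
lemma dropIndex_le (σ : Fin n ≃ V) (v : V) : dropIndex G σ v ≤ σ.symm v :=
  Nat.find_min' _ ⟨σ.symm v, rfl, fun h => G.irrefl (v := v) (by simpa using h _ le_rfl)⟩

open Classical in
lemma lt_dropIndex_iff {σ : Fin n ≃ V} {v : V} {j : Fin n} :
    (j : ℕ) < dropIndex G σ v ↔ v ∈ Vset G σ j := by
  rw [dropIndex, Nat.lt_find_iff]
  refine ⟨fun h => by_contra fun hv => h j le_rfl ⟨j, rfl, hv⟩, ?_⟩
  rintro hv _ hm ⟨k, rfl, hk⟩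
  exact hk (vset_antitone σ (Fin.le_def.mpr hm) hv)

lemma isIntervalGraph_compl_gsigma (σ : Fin n ≃ V) : IsIntervalGraph (Gsigma G σ)ᶜ := by
  refine ⟨fun v => dropIndex G σ v, fun v => (σ.symm v : ℕ),
    fun v => Nat.cast_le.mpr (dropIndex_le G σ v), fun u v huv => ?_⟩
  have hu := dropIndex_le G σ u
  have hv := dropIndex_le G σ v
  rw [SimpleGraph.compl_adj, gsigma_adj, Set.Icc_inter_Icc, Set.nonempty_Icc,
    ← lt_dropIndex_iff, ← lt_dropIndex_iff]
  simp only [max_le_iff, le_min_iff, Nat.cast_le, ne_eq, huv, not_false_eq_true, true_and,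
    not_or, not_lt]
  omega

lemma exists_equiv_strictMono_comp {W α : Type*} [Fintype W] [LinearOrder α] {k : W → α}
    (hk : Injective k) : ∃ τ : Fin (Fintype.card W) ≃ W, StrictMono (k ∘ τ) := by
  let e := (Fintype.equivFin W).symm
  exact ⟨(Tuple.sort (k ∘ e)).trans e, (Tuple.monotone_sort (k ∘ e)).strictMono_of_injective
    (hk.comp (e.injective.comp (Tuple.sort _).injective))⟩

end Ordering

section Tiers

variable {V : Type*} (G : SimpleGraph V) {n : ℕ} (σ₀ : Fin n ≃ V) (i : Fin n) (a b : V)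

open Classical in
noncomputable def tier (v : V) : ℕ :=
  if σ₀.symm v ≤ i then 0 else if G.Adj a v ∧ G.Adj b v then 1 else if G.Adj b v then 2 else 3

noncomputable def tierKey (v : V) : ℕ ×ₗ Fin n :=
  toLex (tier G σ₀ i a b v, σ₀.symm v)

lemma tierKey_injective : Injective (tierKey G σ₀ i a b) :=
  fun _ _ h => σ₀.symm.injective (congrArg Prod.snd (toLex.injective h))

variable {G σ₀ i a b}

lemma tier_le_of_tierKey_le {u w : V} (h : tierKey G σ₀ i a b w ≤ tierKey G σ₀ i a b u) :
    tier G σ₀ i a b w ≤ tier G σ₀ i a b u := by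
  rcases Prod.Lex.toLex_le_toLex.mp h with h | ⟨h, -⟩
  exacts [h.le, h.le]

lemma symm_le_of_tierKey_le {u w : V} (hu : σ₀.symm u ≤ i)
    (h : tierKey G σ₀ i a b w ≤ tierKey G σ₀ i a b u) : σ₀.symm w ≤ σ₀.symm u := by
  have hu0 : tier G σ₀ i a b u = 0 := if_pos hu
  rcases Prod.Lex.toLex_le_toLex.mp h with h | ⟨-, h⟩
  · exact absurd (hu0 ▸ h) (Nat.not_lt_zero _)
  · exact h

lemma tier_le_one {u : V} (ha : G.Adj a u) (hb : G.Adj b u) : tier G σ₀ i a b u ≤ 1 := by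
  unfold tier; split_ifs <;> simp_all

lemma tier_le_two {u : V} (hb : G.Adj b u) : tier G σ₀ i a b u ≤ 2 := by
  unfold tier; split_ifs <;> simp_all

lemma adj_of_tier_le_one {w : V} (ha : a ∈ Vset G σ₀ i) (hw : tier G σ₀ i a b w ≤ 1) :
    G.Adj w a := by
  unfold tier at hw
  split_ifs at hw with h₀ h₁
  exacts [mem_vset_iff.mp ha w h₀, h₁.1.symm, by omega, by omega]

lemma adj_of_tier_le_two {w : V} (hb : b ∈ Vset G σ₀ i) (hw : tier G σ₀ i a b w ≤ 2) :
    G.Adj w b := by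
  unfold tier at hw
  split_ifs at hw with h₀ h₁ h₂
  exacts [mem_vset_iff.mp hb w h₀, h₁.2.symm, h₂.symm, by omega]

theorem gsigma_le_gsigma_of_strictMono_tierKey (hV : Vset G σ₀ i = {a, b}) {σ τ : Fin n ≃ V}
    (hσ : ∀ j, j ≤ i → σ j = σ₀ j) (hab : ∀ j, a ∈ Vset G σ j → b ∈ Vset G σ j)
    (hτ : StrictMono (tierKey G σ₀ i a b ∘ τ)) : Gsigma G σ ≤ Gsigma G τ := by
  have symm_eq {w : V} (hw : σ₀.symm w ≤ i) : σ.symm w = σ₀.symm w := by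
    rw [Equiv.symm_apply_eq, hσ _ hw, Equiv.apply_symm_apply]
  refine gsigma_le_gsigma fun u v hv => mem_vset_iff.mpr fun w hw => ?_
  replace hw : tierKey G σ₀ i a b w ≤ tierKey G σ₀ i a b u := by
    simpa using hτ.le_iff_le.mpr hw
  by_cases hu : σ.symm u ≤ i
  · have hu_eq : σ₀.symm u = σ.symm u := by
      rw [Equiv.symm_apply_eq, ← hσ _ hu, Equiv.apply_symm_apply]
    have hu₀ : σ₀.symm u ≤ i := hu_eq ▸ hu
    have hwu := symm_le_of_tierKey_le hu₀ hw
    exact mem_vset_iff.mp hv w (by rw [symm_eq (hwu.trans hu₀), ← hu_eq]; exact hwu)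
  · have hvV : v ∈ Vset G σ₀ i := by
      rw [← vset_eq_of_prefix hσ]; exact vset_antitone σ (le_of_not_ge hu) hv
    have huv : G.Adj u v := mem_vset_iff.mp hv u le_rfl
    rw [hV] at hvV
    rcases hvV with rfl | rfl
    · have hub : G.Adj u b := mem_vset_iff.mp (hab _ hv) u le_rfl
      exact adj_of_tier_le_one (by simp [hV])
        ((tier_le_of_tierKey_le hw).trans (tier_le_one huv.symm hub.symm))
    · exact adj_of_tier_le_two (by simp [hV])
        ((tier_le_of_tierKey_le hw).trans (tier_le_two huv.symm))

end Tiers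

/-- If `|N⁺(v_i)| = 2` for a prefix, at most two maximal interval-order subgraphs extend it. -/
theorem at_most_two_extensions {V : Type*} [Fintype V] (G : SimpleGraph V)
    (σ₀ : Fin (Fintype.card V) ≃ V) (i : Fin (Fintype.card V))
    (hcard : (Vset G σ₀ i).ncard = 2) :
    Set.ncard {H : SimpleGraph V |
      (∃ σ : Fin (Fintype.card V) ≃ V, (∀ j, j ≤ i → σ j = σ₀ j) ∧ H = Gsigma G σ) ∧
      H ≤ G ∧ IsIntervalGraph Hᶜ ∧
      (∀ H', H' ≤ G → IsIntervalGraph H'ᶜ → H ≤ H' → H' = H)} ≤ 2 := by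
  obtain ⟨a, b, -, hV⟩ := Set.ncard_eq_two.mp hcard
  obtain ⟨τ₁, hτ₁⟩ := exists_equiv_strictMono_comp (tierKey_injective G σ₀ i a b)
  obtain ⟨τ₂, hτ₂⟩ := exists_equiv_strictMono_comp (tierKey_injective G σ₀ i b a)
  refine (Set.ncard_le_ncard (t := {Gsigma G τ₁, Gsigma G τ₂}) ?_ (Set.toFinite _)).trans
    ((Set.ncard_insert_le _ _).trans (by simp))
  rintro _ ⟨⟨σ, hσ, rfl⟩, -, -, hmax⟩
  have eq_of_le (τ : Fin (Fintype.card V) ≃ V) (h : Gsigma G σ ≤ Gsigma G τ) :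
      Gsigma G σ = Gsigma G τ :=
    (hmax _ (gsigma_le τ) (isIntervalGraph_compl_gsigma τ) h).symm
  rcases vset_total σ a b with hab | hba
  · exact Or.inl (eq_of_le τ₁ (gsigma_le_gsigma_of_strictMono_tierKey hV hσ hab hτ₁))
  · exact Or.inr (eq_of_le τ₂
      (gsigma_le_gsigma_of_strictMono_tierKey (hV.trans (Set.pair_comm a b)) hσ hba hτ₂))
end
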